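/- arXiv:1505.06464 — 3 statements merged into one kernel-verified Lean document; each statement's English description precedes it below -/
import Mathlib

section
/- The duplication intertwining relation: D T x = T² D x for every configuration x, where D is the duplication map. More generally, Dⁿ T x = T^(2ⁿ) Dⁿ x. -/
/-- Duplication intertwining: if `D` duplicates every symbol
(`(Dx)_{2i} = (Dx)_{2i+1} = x_i`), then `D T x = T² D x`, and more generally
`Dⁿ T x = T^(2ⁿ) Dⁿ x`. -/
theorem xor_ca_duplication_intertwining
    (D : (ℤ → ZMod 2) → (ℤ → ZMod 2))
    (hD : ∀ (x : ℤ → ZMod 2) (i : ℤ), D x (2 * i) = x i ∧ D x (2 * i + 1) = x i)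
    (T : (ℤ → ZMod 2) → (ℤ → ZMod 2))
    (hT : ∀ (x : ℤ → ZMod 2) (i : ℤ), T x i = x i + x (i + 1)) :
    (∀ x, D (T x) = T^[2] (D x)) ∧
    (∀ (n : ℕ) (x), D^[n] (T x) = T^[2 ^ n] (D^[n] x)) := by
  have hself : ∀ a : ZMod 2, a + a = 0 := by decide
  have base : ∀ x, D (T x) = T^[2] (D x) := by
    intro x
    funext j
    show D (T x) j = T (T (D x)) j
    rcases Int.even_or_odd j with ⟨i, hi⟩ | ⟨i, hi⟩
    · have hj : j = 2 * i := by omega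
      subst hj
      have h1 : (2 : ℤ) * i + 1 + 1 = 2 * (i + 1) := by ring
      rw [(hD (T x) i).1, hT, hT, hT, hT, h1, (hD x i).1, (hD x i).2,
        (hD x (i + 1)).1, hself (x i), zero_add]
    · have hj : j = 2 * i + 1 := by omega
      subst hj
      have h1 : (2 : ℤ) * i + 1 + 1 = 2 * (i + 1) := by ring
      have h2 : (2 : ℤ) * i + 1 + 1 + 1 = 2 * (i + 1) + 1 := by ring
      rw [(hD (T x) i).2, hT, hT, hT, hT, h1, (hD x i).2,
        (hD x (i + 1)).1, (hD x (i + 1)).2,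
        hself (x (i + 1)), add_zero]
  refine ⟨base, ?_⟩
  have key : ∀ (k : ℕ) (x), D (T^[k] x) = T^[2 * k] (D x) := by
    intro k
    induction k with
    | zero => intro x; simp
    | succ k ih =>
      intro x
      have h : 2 * k + 2 = 2 * (k + 1) := by ring
      rw [Function.iterate_succ_apply, ih, base, ← Function.iterate_add_apply, h]
  intro n
  induction n with
  | zero => intro x; simp
  | succ n ih =>
    intro x
    have h : 2 * 2 ^ n = 2 ^ (n + 1) := by ring
    rw [Function.iterate_succ_apply', ih, key, h, Function.iterate_succ_apply']
end

section
/- Entropy increase in one step of XOR on a Bernoulli configuration: if X and Y are independent Bernoulli(p) random variables with values in ZMod 2 and p ∈ (0,1), then X + Y is Bernoulli(2p(1-p)), and the binary entropy satisfies H(2p(1-p)) ≥ H(p), with equality if and only if p = 1/2. -/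
open ProbabilityTheory MeasureTheory Real

lemma binEntropy_aux {p : ℝ} (hp0 : 0 < p) (hp1 : p < 1) :
    Real.binEntropy p ≤ Real.binEntropy (2 * p * (1 - p)) ∧
    (Real.binEntropy (2 * p * (1 - p)) = Real.binEntropy p ↔ p = 1 / 2) := by
  have key : ∀ r : ℝ, 0 < r → r ≤ 1 / 2 →
      Real.binEntropy r ≤ Real.binEntropy (2 * r * (1 - r)) ∧
      (Real.binEntropy (2 * r * (1 - r)) = Real.binEntropy r ↔ r = 1 / 2) := by
    intro r hr0 hr2
    have hq2 : 2 * r * (1 - r) ≤ 1 / 2 := by nlinarith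
    have hrq : r ≤ 2 * r * (1 - r) := by nlinarith
    have hmem1 : r ∈ Set.Icc (0:ℝ) 2⁻¹ := ⟨hr0.le, by linarith [hr2]⟩
    have hmem2 : 2 * r * (1 - r) ∈ Set.Icc (0:ℝ) 2⁻¹ :=
      ⟨by nlinarith, by linarith [hq2]⟩
    constructor
    · exact Real.binEntropy_strictMonoOn.monotoneOn hmem1 hmem2 hrq
    · constructor
      · intro heq
        by_contra hne
        have hlt : r < 1 / 2 := lt_of_le_of_ne hr2 hne
        have hrq' : r < 2 * r * (1 - r) := by nlinarith
        have := Real.binEntropy_strictMonoOn hmem1 hmem2 hrq'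
        linarith
      · intro h; rw [h]; norm_num
  rcases le_or_gt p (1 / 2) with h | h
  · exact key p hp0 h
  · have h1 : 2 * p * (1 - p) = 2 * (1 - p) * (1 - (1 - p)) := by ring
    have h2 := key (1 - p) (by linarith) (by linarith)
    rw [h1]
    rw [← Real.binEntropy_one_sub p]
    refine ⟨h2.1, h2.2.trans ?_⟩
    constructor <;> intro hh <;> linarith

/-- Entropy increase in one step of XOR on a Bernoulli configuration: if `X`
and `Y` are independent `Bernoulli(p)` random variables with values in
`ZMod 2` and `p ∈ (0,1)`, then `X + Y` is `Bernoulli(2p(1-p))`, and the binary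
entropy satisfies `H(2p(1-p)) ≥ H(p)`, with equality iff `p = 1/2`. -/
theorem xor_entropy_increase
    (H : ℝ → ℝ) (hH : ∀ q : ℝ, H q = -(q * Real.log q) - (1 - q) * Real.log (1 - q))
    {Ω : Type*} [MeasurableSpace Ω] (P : Measure Ω) [IsProbabilityMeasure P]
    [MeasurableSpace (ZMod 2)] [MeasurableSingletonClass (ZMod 2)]
    (X Y : Ω → ZMod 2) (hX : Measurable X) (hY : Measurable Y)
    (hindep : IndepFun X Y P)
    (p : ℝ) (hp : p ∈ Set.Ioo (0 : ℝ) 1)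
    (hXp : (P {ω | X ω = 1}).toReal = p)
    (hYp : (P {ω | Y ω = 1}).toReal = p) :
    (P {ω | X ω + Y ω = 1}).toReal = 2 * p * (1 - p) ∧
    H (2 * p * (1 - p)) ≥ H p ∧
    (H (2 * p * (1 - p)) = H p ↔ p = 1 / 2) := by
  obtain ⟨hp0, hp1⟩ := hp
  have hHbin : ∀ q : ℝ, H q = Real.binEntropy q := by
    intro q
    rw [hH, Real.binEntropy, Real.log_inv, Real.log_inv]
    ring
  -- probability part
  have hkey : ∀ x y : ZMod 2, x + y = 1 ↔ (x ∈ ({1}ᶜ : Set (ZMod 2)) ∧ y ∈ ({1} : Set (ZMod 2)))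
      ∨ (x ∈ ({1} : Set (ZMod 2)) ∧ y ∈ ({1}ᶜ : Set (ZMod 2))) := by decide
  have hset : {ω | X ω + Y ω = 1} =
      (X ⁻¹' {1}ᶜ ∩ Y ⁻¹' {1}) ∪ (X ⁻¹' {1} ∩ Y ⁻¹' {1}ᶜ) := by
    ext ω
    exact hkey (X ω) (Y ω)
  have hms : MeasurableSet ({1} : Set (ZMod 2)) := measurableSet_singleton 1
  have hA : MeasurableSet (X ⁻¹' {1}) := hX hms
  have hB : MeasurableSet (Y ⁻¹' {1}) := hY hms
  have hdisj : Disjoint (X ⁻¹' {1}ᶜ ∩ Y ⁻¹' {1}) (X ⁻¹' {1} ∩ Y ⁻¹' {1}ᶜ) := by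
    apply Set.disjoint_left.mpr
    rintro ω ⟨h1, -⟩ ⟨h2, -⟩
    exact h1 h2
  have hm1 := hindep.measure_inter_preimage_eq_mul ({1}ᶜ : Set (ZMod 2)) ({1} : Set (ZMod 2))
    hms.compl hms
  have hm2 := hindep.measure_inter_preimage_eq_mul ({1} : Set (ZMod 2)) ({1}ᶜ : Set (ZMod 2))
    hms hms.compl
  have hXpre : P (X ⁻¹' {1}) = P {ω | X ω = 1} := rfl
  have hYpre : P (Y ⁻¹' {1}) = P {ω | Y ω = 1} := rfl
  have hcomplX : (P (X ⁻¹' {1}ᶜ)).toReal = 1 - p := by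
    rw [Set.preimage_compl, measure_compl hA (measure_ne_top _ _), measure_univ,
      ENNReal.toReal_sub_of_le prob_le_one (by simp)]
    simp [hXpre, hXp]
  have hcomplY : (P (Y ⁻¹' {1}ᶜ)).toReal = 1 - p := by
    rw [Set.preimage_compl, measure_compl hB (measure_ne_top _ _), measure_univ,
      ENNReal.toReal_sub_of_le prob_le_one (by simp)]
    simp [hYpre, hYp]
  have hprob : (P {ω | X ω + Y ω = 1}).toReal = 2 * p * (1 - p) := by
    rw [hset, measure_union hdisj (hA.inter hB.compl), hm1, hm2,
      ENNReal.toReal_add (by finiteness) (by finiteness),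
      ENNReal.toReal_mul, ENNReal.toReal_mul, hcomplX, hcomplY, hXpre, hYpre, hXp, hYp]
    ring
  have haux := binEntropy_aux hp0 hp1
  refine ⟨hprob, ?_, ?_⟩
  · rw [hHbin, hHbin]; exact haux.1
  · rw [hHbin, hHbin]; exact haux.2
end

section
/- In a one-dimensional surjective cellular automaton, distinct configurations differing in only finitely many sites have distinct images: if T : S^ℤ → S^ℤ is a surjective shift-commuting continuous map, and x ≠ y agree outside a finite set, then Tx ≠ Ty. -/
/-- Continuity + compactness gives a radius `r` such that `T z 0` depends only on
coordinates `|j| ≤ r`. -/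
lemma chl_zero {S : Type*} [Finite S] [TopologicalSpace S] [DiscreteTopology S]
    (T : (ℤ → S) → (ℤ → S)) (hTcont : Continuous T) :
    ∃ r : ℕ, ∀ z w : ℤ → S, (∀ j : ℤ, j.natAbs ≤ r → z j = w j) → T z 0 = T w 0 := by
  classical
  have hcont : ∀ z : ℤ → S, ∃ I : Finset ℤ, ∀ w : ℤ → S,
      (∀ j ∈ I, w j = z j) → T w 0 = T z 0 := by
    intro z
    have hopen : IsOpen {w : ℤ → S | T w 0 = T z 0} := by
      have hc : Continuous fun w : ℤ → S => T w 0 := (continuous_apply (0:ℤ)).comp hTcont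
      exact hc.isOpen_preimage {T z 0} (isOpen_discrete _)
    rw [isOpen_pi_iff] at hopen
    obtain ⟨I, u, hIu, hsub⟩ := hopen z rfl
    refine ⟨I, fun w hw => hsub ?_⟩
    intro j hj
    have := (hIu j hj).2
    rw [← hw j hj] at this
    exact this
  choose I hI using hcont
  have hopen : ∀ z : ℤ → S, IsOpen {w : ℤ → S | ∀ j ∈ I z, w j = z j} := by
    intro z
    have : {w : ℤ → S | ∀ j ∈ I z, w j = z j}
        = Set.pi (↑(I z)) (fun j => {z j}) := by
      ext w
      simp [Set.mem_pi]
    rw [this]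
    exact isOpen_set_pi (I z).finite_toSet (fun a _ => isOpen_discrete _)
  have hcover : (Set.univ : Set (ℤ → S)) ⊆
      ⋃ z : (ℤ → S), {w : ℤ → S | ∀ j ∈ I z, w j = z j} := by
    intro z _
    exact Set.mem_iUnion.2 ⟨z, fun j _ => rfl⟩
  obtain ⟨Z, hZ⟩ := isCompact_univ.elim_finite_subcover _ hopen hcover
  refine ⟨(Z.biUnion I).sup Int.natAbs, fun z w hzw => ?_⟩
  obtain ⟨z₀, hz₀, hzc⟩ := Set.mem_iUnion₂.1 (hZ (Set.mem_univ z))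
  have hagree : ∀ j ∈ I z₀, w j = z₀ j := by
    intro j hj
    have hmem : j ∈ Z.biUnion I := Finset.mem_biUnion.2 ⟨z₀, hz₀, hj⟩
    have hle : j.natAbs ≤ (Z.biUnion I).sup Int.natAbs := Finset.le_sup hmem
    rw [← hzw j hle]
    exact hzc j hj
  rw [hI z₀ w hagree, hI z₀ z hzc]

/-- `T` commutes with all shifts. -/
lemma shift_commute {S : Type*}
    (σ T : (ℤ → S) → (ℤ → S)) (hσ : ∀ x i, σ x i = x (i + 1)) (hTσ : T ∘ σ = σ ∘ T)
    (t : ℤ) (z : ℤ → S) : T (fun i => z (i + t)) = fun i => T z (i + t) := by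
  have hσinj : Function.Injective σ := by
    intro u v huv
    funext i
    have h1 : σ u (i - 1) = σ v (i - 1) := by rw [huv]
    rw [hσ, hσ] at h1
    simpa using h1
  have hcom : ∀ u, T (σ u) = σ (T u) := fun u => congrFun hTσ u
  induction t using Int.induction_on generalizing z with
  | zero => simp
  | succ n ih =>
      have h1 : (fun i => z (i + ((n:ℤ) + 1))) = σ (fun i => z (i + n)) := by
        funext i; rw [hσ]; ring_nf
      rw [h1, hcom, ih]
      funext i
      rw [hσ]; ring_nf
  | pred n ih =>
      apply hσinj
      rw [← hcom]
      have h1 : σ (fun i => z (i + (-(n:ℤ) - 1))) = fun i => z (i + -(n:ℤ)) := by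
        funext i; rw [hσ]; ring_nf
      rw [h1, ih]
      funext i
      rw [hσ]; ring_nf

/-- Local rule at every coordinate. -/
lemma local_rule {S : Type*} [Finite S] [TopologicalSpace S] [DiscreteTopology S]
    (σ T : (ℤ → S) → (ℤ → S)) (hσ : ∀ x i, σ x i = x (i + 1)) (hTσ : T ∘ σ = σ ∘ T)
    (hTcont : Continuous T) :
    ∃ r : ℕ, ∀ (z w : ℤ → S) (i : ℤ),
      (∀ j : ℤ, i - r ≤ j → j ≤ i + r → z j = w j) → T z i = T w i := by
  obtain ⟨r, hr⟩ := chl_zero T hTcont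
  refine ⟨r, fun z w i hzw => ?_⟩
  have h1 := congrFun (shift_commute σ T hσ hTσ i z) 0
  have h2 := congrFun (shift_commute σ T hσ hTσ i w) 0
  have h0 : T (fun j => z (j + i)) 0 = T (fun j => w (j + i)) 0 := by
    apply hr
    intro j hj
    apply hzw
    · omega
    · omega
  simp only [zero_add] at h1 h2
  rw [← h1, ← h2, h0]

/-- Base substitution lemma: replacing the pattern of `x` on `[a-2r, b+2r]` by that
of `y` does not change the image under `T`, provided `T x = T y` and `x = y` off `[a,b]`. -/
lemma subst_base {S : Type*} (T : (ℤ → S) → (ℤ → S)) (r : ℕ)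
    (Hloc : ∀ (z w : ℤ → S) (i : ℤ),
      (∀ j : ℤ, i - r ≤ j → j ≤ i + r → z j = w j) → T z i = T w i)
    (x y : ℤ → S) (hTxy : T x = T y) (a b : ℤ)
    (hD : ∀ i, x i ≠ y i → a ≤ i ∧ i ≤ b)
    (z : ℤ → S) (hz : ∀ j, a - 2*r ≤ j → j ≤ b + 2*r → z j = x j) :
    T (fun i => if a ≤ i ∧ i ≤ b then y i else z i) = T z := by
  funext i
  by_cases hcase : ∃ j : ℤ, i - r ≤ j ∧ j ≤ i + r ∧ a ≤ j ∧ j ≤ b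
  · obtain ⟨j₀, hj₁, hj₂, hj₃, hj₄⟩ := hcase
    have hwin : ∀ l : ℤ, i - r ≤ l → l ≤ i + r → a - 2*r ≤ l ∧ l ≤ b + 2*r := by
      intro l h1 h2; omega
    have h1 : T (fun i => if a ≤ i ∧ i ≤ b then y i else z i) i = T y i := by
      apply Hloc
      intro l hl1 hl2
      obtain ⟨hla, hlb⟩ := hwin l hl1 hl2
      by_cases hab : a ≤ l ∧ l ≤ b
      · simp [hab]
      · simp only [hab, if_false]
        have hxl : x l = y l := by
          by_contra hne
          exact hab (hD l hne)
        rw [hz l hla hlb, hxl]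
    have h2 : T z i = T x i := by
      apply Hloc
      intro l hl1 hl2
      exact hz l (hwin l hl1 hl2).1 (hwin l hl1 hl2).2
    rw [h1, h2, hTxy]
  · apply Hloc
    intro l h1 h2
    have hab : ¬ (a ≤ l ∧ l ≤ b) := fun h => hcase ⟨l, h1, h2, h.1, h.2⟩
    simp [hab]

open Classical in
/-- Iteratively substitute the `x`-pattern for the `y`-pattern in blocks
`[j*m, (j+1)*m)` (block `j` = translate of `[A,B]` by `t j = j*m - A`). -/
noncomputable def substIter {S : Type*} (x y : ℤ → S) (a b A B m : ℤ)
    (u : ℤ → S) : ℕ → (ℤ → S)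
  | 0 => u
  | (j+1) =>
      let v := substIter x y a b A B m u j
      let t : ℤ := (j : ℤ) * m - A
      if (∀ l : ℤ, A ≤ l → l ≤ B → v (l + t) = y l) then
        (fun i => if a ≤ i - t ∧ i - t ≤ b then x (i - t) else v i)
      else v

lemma substIter_change {S : Type*} (x y : ℤ → S) (a b A B m : ℤ)
    (hAa : A ≤ a) (hbB : b ≤ B)
    (u : ℤ → S) (j : ℕ) (i : ℤ)
    (hne : substIter x y a b A B m u (j+1) i ≠ substIter x y a b A B m u j i) :
    A + ((j:ℤ) * m - A) ≤ i ∧ i ≤ B + ((j:ℤ) * m - A) := by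
  classical
  rw [substIter] at hne
  split at hne
  · by_cases hc : a ≤ i - ((j:ℤ) * m - A) ∧ i - ((j:ℤ) * m - A) ≤ b
    · omega
    · simp only [hc, if_false] at hne
      exact absurd rfl hne
  · exact absurd rfl hne

/-- Substitution at an arbitrary translate preserves the image. Here we substitute
the `x`-pattern for the `y`-pattern. -/
lemma subst_shift {S : Type*}
    (σ T : (ℤ → S) → (ℤ → S)) (hσ : ∀ x i, σ x i = x (i + 1)) (hTσ : T ∘ σ = σ ∘ T)
    (r : ℕ)
    (Hloc : ∀ (z w : ℤ → S) (i : ℤ),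
      (∀ j : ℤ, i - r ≤ j → j ≤ i + r → z j = w j) → T z i = T w i)
    (x y : ℤ → S) (hTxy : T x = T y) (a b : ℤ)
    (hD : ∀ i, x i ≠ y i → a ≤ i ∧ i ≤ b)
    (t : ℤ) (z : ℤ → S) (hz : ∀ j, a - 2*r ≤ j → j ≤ b + 2*r → z (j + t) = y j) :
    T (fun i => if a ≤ i - t ∧ i - t ≤ b then x (i - t) else z i) = T z := by
  set z₀ : ℤ → S := fun j => z (j + t) with hz₀
  have hD' : ∀ i, y i ≠ x i → a ≤ i ∧ i ≤ b := fun i h => hD i (Ne.symm h)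
  have hbase := subst_base T r Hloc y x hTxy.symm a b hD' z₀ hz
  set w₀ : ℤ → S := fun i => if a ≤ i ∧ i ≤ b then x i else z₀ i with hw₀
  have hrepr : (fun i => if a ≤ i - t ∧ i - t ≤ b then x (i - t) else z i)
      = fun i => w₀ (i + (-t)) := by
    funext i
    have hit : i + (-t) = i - t := by ring
    rw [hit, hw₀]
    by_cases hc : a ≤ i - t ∧ i - t ≤ b
    · simp [hc]
    · simp only [hc, if_false, hz₀]
      congr 1
      ring
  rw [hrepr, shift_commute σ T hσ hTσ (-t) w₀, ]
  funext i
  rw [hbase]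
  have := congrFun (shift_commute σ T hσ hTσ t z) (i + (-t))
  rw [hz₀, this]
  congr 1
  ring

/-- Iterated substitution preserves the image under `T`. -/
lemma substIter_image {S : Type*}
    (σ T : (ℤ → S) → (ℤ → S)) (hσ : ∀ x i, σ x i = x (i + 1)) (hTσ : T ∘ σ = σ ∘ T)
    (r : ℕ)
    (Hloc : ∀ (z w : ℤ → S) (i : ℤ),
      (∀ j : ℤ, i - r ≤ j → j ≤ i + r → z j = w j) → T z i = T w i)
    (x y : ℤ → S) (hTxy : T x = T y) (a b A B m : ℤ)
    (hA : A = a - 2*r) (hB : B = b + 2*r)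
    (hD : ∀ i, x i ≠ y i → a ≤ i ∧ i ≤ b)
    (u : ℤ → S) (k : ℕ) :
    T (substIter x y a b A B m u k) = T u := by
  classical
  induction k with
  | zero => rfl
  | succ j ih =>
      rw [substIter]
      split
      · rename_i hmatch
        rw [subst_shift σ T hσ hTσ r Hloc x y hTxy a b hD _ _
          (fun l hl1 hl2 => hmatch l (by omega) (by omega))]
        exact ih
      · exact ih

/-- Coordinates in block `j` are stable after step `j+1`. -/
lemma substIter_stable {S : Type*} (x y : ℤ → S) (a b A B m : ℤ)
    (hAa : A ≤ a) (hbB : b ≤ B) (hm : m = B - A + 1)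
    (u : ℤ → S) (j : ℕ) (i : ℤ) (hi : i ≤ B + ((j:ℤ) * m - A)) :
    ∀ k, j + 1 ≤ k → substIter x y a b A B m u k i = substIter x y a b A B m u (j+1) i := by
  intro k hk
  induction k with
  | zero => omega
  | succ k' ih =>
      rcases Nat.lt_or_ge (j+1) (k'+1) with h | h
      · have hk' : j + 1 ≤ k' := by omega
        rw [← ih hk']
        by_contra hne
        have hch := substIter_change x y a b A B m hAa hbB u k' i (Ne.symm hne ∘ Eq.symm)
        have hmul : ((j:ℤ)+1) * m ≤ (k':ℤ) * m := by
          apply mul_le_mul_of_nonneg_right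
          · exact_mod_cast hk'
          · omega
        have hexp : ((j:ℤ)+1) * m = (j:ℤ) * m + m := by ring
        omega
      · have : k' + 1 = j + 1 := by omega
        rw [this]

/-- In the final configuration, every block avoids the `y`-pattern. -/
lemma substIter_block {S : Type*} (x y : ℤ → S) (a b A B m : ℤ)
    (hAa : A ≤ a) (hbB : b ≤ B) (hm : m = B - A + 1)
    (l₀ : ℤ) (hl₀a : a ≤ l₀) (hl₀b : l₀ ≤ b) (hl₀ : x l₀ ≠ y l₀)
    (u : ℤ → S) (k j : ℕ) (hjk : j < k) :
    ∃ l : ℤ, A ≤ l ∧ l ≤ B ∧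
      substIter x y a b A B m u k (l + ((j:ℤ) * m - A)) ≠ y l := by
  classical
  set t : ℤ := (j:ℤ) * m - A with ht
  by_cases hmatch : ∀ l : ℤ, A ≤ l → l ≤ B →
      substIter x y a b A B m u j (l + t) = y l
  · refine ⟨l₀, by omega, by omega, ?_⟩
    have hstep : substIter x y a b A B m u (j+1) (l₀ + t) = x l₀ := by
      rw [substIter]
      simp only [← ht]
      rw [if_pos hmatch]
      have hsimp : l₀ + t - t = l₀ := by ring
      rw [hsimp]
      exact if_pos ⟨hl₀a, hl₀b⟩
    rw [substIter_stable x y a b A B m hAa hbB hm u j (l₀ + t) (by omega) k hjk]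
    rw [hstep]
    exact hl₀
  · push_neg at hmatch
    obtain ⟨l, hl1, hl2, hl3⟩ := hmatch
    refine ⟨l, hl1, hl2, ?_⟩
    have hstep : substIter x y a b A B m u (j+1) (l + t) =
        substIter x y a b A B m u j (l + t) := by
      rw [substIter]
      simp only [← ht]
      rw [if_neg]
      push_neg
      exact ⟨l, hl1, hl2, hl3⟩
    rw [substIter_stable x y a b A B m hAa hbB hm u j (l + t) (by omega) k hjk]
    rw [hstep]
    exact hl3

/-- The counting step: for every `k`, the number of words of length `k * m` is at most
`s^(2r+1) * (s^m - 1)^k`. -/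
lemma count_le {S : Type*} [Fintype S] [DecidableEq S]
    (σ T : (ℤ → S) → (ℤ → S)) (hσ : ∀ x i, σ x i = x (i + 1)) (hTσ : T ∘ σ = σ ∘ T)
    (r : ℕ)
    (Hloc : ∀ (z w : ℤ → S) (i : ℤ),
      (∀ j : ℤ, i - r ≤ j → j ≤ i + r → z j = w j) → T z i = T w i)
    (hTsurj : Function.Surjective T)
    (x y : ℤ → S) (hTxy : T x = T y) (a b A B m : ℤ)
    (hA : A = a - 2*r) (hB : B = b + 2*r) (hm : m = B - A + 1)
    (hD : ∀ i, x i ≠ y i → a ≤ i ∧ i ≤ b)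
    (l₀ : ℤ) (hl₀a : a ≤ l₀) (hl₀b : l₀ ≤ b) (hl₀ : x l₀ ≠ y l₀)
    (k : ℕ) :
    Fintype.card S ^ (k * m.toNat) ≤
      Fintype.card S ^ (2*r+1) * (Fintype.card S ^ m.toNat - 1) ^ k := by
  classical
  haveI : Inhabited S := ⟨x 0⟩
  have hAa : A ≤ a := by omega
  have hbB : b ≤ B := by omega
  have hab : a ≤ b := le_trans hl₀a hl₀b
  have hmpos : 0 < m := by omega
  set N : ℤ := (k:ℤ) * m with hN
  have hNg : ((k * m.toNat : ℕ) : ℤ) = N := by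
    push_cast
    rw [Int.toNat_of_nonneg (le_of_lt hmpos)]
  have hNnn : 0 ≤ N := by omega
  set W : Finset ℤ := Finset.Icc 0 (N-1) with hW
  set E : Finset ℤ := Finset.Icc (-(r:ℤ)) (N + r) with hE
  have hWE : W ⊆ E := by
    intro i hi
    rw [hW, Finset.mem_Icc] at hi
    rw [hE, Finset.mem_Icc]
    omega
  -- construct, for each word, a configuration mapping onto it with all blocks ≠ y-pattern
  have hv : ∀ wa : (↥W → S), ∃ v : ℤ → S,
      (∀ i (h : i ∈ W), T v i = wa ⟨i, h⟩) ∧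
      (∀ j : ℕ, j < k → ∃ l : ℤ, A ≤ l ∧ l ≤ B ∧ v (l + ((j:ℤ) * m - A)) ≠ y l) := by
    intro wa
    set w : ℤ → S := fun i => if h : i ∈ W then wa ⟨i, h⟩ else default with hw
    obtain ⟨u, hu⟩ := hTsurj w
    refine ⟨substIter x y a b A B m u k, ?_, ?_⟩
    · intro i h
      rw [substIter_image σ T hσ hTσ r Hloc x y hTxy a b A B m hA hB hD u k, hu]
      simp [hw, h]
    · intro j hj
      exact substIter_block x y a b A B m hAa hbB hm l₀ hl₀a hl₀b hl₀ u k j hj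
  choose v hv1 hv2 using hv
  set qq : (↥(Finset.Icc A B) → S) := fun l => y (l : ℤ) with hq
  -- the injection
  set Φ : (↥W → S) → ((↥(E \ W) → S) × (Fin k → {f : ↥(Finset.Icc A B) → S // f ≠ qq})) :=
    fun wa => (fun e => v wa (e : ℤ),
      fun j => ⟨fun l => v wa ((l : ℤ) + ((j.val : ℤ) * m - A)), by
        intro heq
        obtain ⟨l, hl1, hl2, hl3⟩ := hv2 wa j.val j.isLt
        exact hl3 (by
          have := congrFun heq ⟨l, Finset.mem_Icc.2 ⟨hl1, hl2⟩⟩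
          exact this)⟩) with hΦ
  have hΦinj : Function.Injective Φ := by
    intro wa wa' heq
    have h1 : ∀ e : ↥(E \ W), v wa (e : ℤ) = v wa' (e : ℤ) :=
      fun e => congrFun (congrArg Prod.fst heq) e
    have h2 : ∀ (j : Fin k) (l : ↥(Finset.Icc A B)),
        v wa ((l : ℤ) + ((j.val : ℤ) * m - A)) = v wa' ((l : ℤ) + ((j.val : ℤ) * m - A)) := by
      intro j l
      have := congrFun (congrArg Prod.snd heq) j
      have := congrArg Subtype.val this
      exact congrFun this l
    have hvE : ∀ i ∈ E, v wa i = v wa' i := by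
      intro i hi
      by_cases hiW : i ∈ W
      · rw [hW, Finset.mem_Icc] at hiW
        have hd0 : 0 ≤ i / m := Int.ediv_nonneg (by omega) (le_of_lt hmpos)
        have hd1 : m * (i / m) + i % m = i := Int.mul_ediv_add_emod i m
        have hd2 : 0 ≤ i % m := Int.emod_nonneg i (by omega)
        have hd3 : i % m < m := Int.emod_lt_of_pos i hmpos
        have hdk : i / m < (k : ℤ) := by
          by_contra hc
          push_neg at hc
          have : m * (k:ℤ) ≤ m * (i / m) := mul_le_mul_of_nonneg_left hc (le_of_lt hmpos)
          have hkm : m * (k:ℤ) = N := by rw [hN]; ring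
          omega
        set j : ℕ := (i / m).toNat with hj
        have hjcast : ((j:ℕ) : ℤ) = i / m := Int.toNat_of_nonneg hd0
        have hjlt : j < k := by omega
        set l : ℤ := i - ((j:ℤ) * m - A) with hl
        have hcomm : m * (i / m) = (i / m) * m := mul_comm _ _
        have hlA : A ≤ l := by
          rw [hl]
          have : (j:ℤ) * m = (i/m) * m := by rw [hjcast]
          omega
        have hlB : l ≤ B := by
          rw [hl]
          have : (j:ℤ) * m = (i/m) * m := by rw [hjcast]
          omega
        have := h2 ⟨j, hjlt⟩ ⟨l, Finset.mem_Icc.2 ⟨hlA, hlB⟩⟩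
        have hli : l + ((j:ℤ) * m - A) = i := by rw [hl]; ring
        rw [hli] at this
        exact this
      · exact h1 ⟨i, Finset.mem_sdiff.2 ⟨hi, hiW⟩⟩
    funext i
    obtain ⟨iv, hiv⟩ := i
    rw [← hv1 wa iv hiv, ← hv1 wa' iv hiv]
    apply Hloc
    intro jj hj1 hj2
    apply hvE
    rw [hW, Finset.mem_Icc] at hiv
    rw [hE, Finset.mem_Icc]
    omega
  -- cardinalities
  have hcard := Fintype.card_le_of_injective Φ hΦinj
  have hcW : Fintype.card (↥W → S) = Fintype.card S ^ (k * m.toNat) := by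
    rw [Fintype.card_fun, Fintype.card_coe, hW, Int.card_Icc]
    congr 1
    omega
  have hcIcc : Fintype.card ↥(Finset.Icc A B) = m.toNat := by
    rw [Fintype.card_coe, Int.card_Icc]
    congr 1
    omega
  have hcsub : Fintype.card {f : ↥(Finset.Icc A B) → S // f ≠ qq}
      = Fintype.card S ^ m.toNat - 1 := by
    have h1 : Fintype.card {f : ↥(Finset.Icc A B) → S // f = qq} = 1 :=
      Fintype.card_subtype_eq qq
    have h2 := Fintype.card_subtype_compl (fun f : ↥(Finset.Icc A B) → S => f = qq)
    rw [h1] at h2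
    rw [h2, Fintype.card_fun, hcIcc]
  have hcEW : Fintype.card (↥(E \ W) → S) = Fintype.card S ^ (2*r+1) := by
    rw [Fintype.card_fun, Fintype.card_coe, Finset.card_sdiff_of_subset hWE, hW, hE,
      Int.card_Icc, Int.card_Icc]
    congr 1
    omega
  rw [Fintype.card_prod, hcW, hcEW, Fintype.card_fun, Fintype.card_fin, hcsub] at hcard
  exact hcard

lemma arith_exists (M t : ℕ) (hM : 1 ≤ M) (ht : 2 ≤ t) :
    ∃ k : ℕ, M * (t - 1) ^ k < t ^ k := by
  have htR : (2:ℝ) ≤ (t:ℝ) := by exact_mod_cast ht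
  have htpos : (0:ℝ) < (t:ℝ) := by linarith
  have hrho : ((t:ℝ) - 1) / t < 1 := by
    rw [div_lt_one htpos]; linarith
  have hMpos : (0:ℝ) < 1 / (M:ℝ) := by
    have : (0:ℝ) < (M:ℝ) := by exact_mod_cast hM
    positivity
  obtain ⟨n, hn⟩ := exists_pow_lt_of_lt_one hMpos hrho
  refine ⟨n, ?_⟩
  have hcast : ((t - 1 : ℕ) : ℝ) = (t:ℝ) - 1 := by
    have : 1 ≤ t := by omega
    push_cast [this]
    ring
  have hR : (M:ℝ) * ((t:ℝ) - 1) ^ n < (t:ℝ) ^ n := by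
    rw [div_pow] at hn
    have htn : (0:ℝ) < (t:ℝ) ^ n := by positivity
    rw [div_lt_div_iff₀ htn (by exact_mod_cast hM : (0:ℝ) < (M:ℝ))] at hn
    nlinarith [hn]
  have : ((M * (t-1)^n : ℕ) : ℝ) < ((t^n : ℕ) : ℝ) := by
    push_cast [hcast]
    exact_mod_cast hR
  exact_mod_cast this

/-- Pre-injectivity of surjective cellular automata on `ℤ`: if
`T : S^ℤ → S^ℤ` is continuous, shift-commuting and surjective, and `x ≠ y`
agree outside a finite set, then `T x ≠ T y`. -/
theorem surjective_ca_preinjective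
    {S : Type*} [Finite S] [TopologicalSpace S] [DiscreteTopology S]
    (σ : (ℤ → S) → (ℤ → S)) (hσ : ∀ x i, σ x i = x (i + 1))
    (T : (ℤ → S) → (ℤ → S)) (hTcont : Continuous T) (hTσ : T ∘ σ = σ ∘ T)
    (hTsurj : Function.Surjective T)
    (x y : ℤ → S) (hxy : x ≠ y) (hfin : Set.Finite {i : ℤ | x i ≠ y i}) :
    T x ≠ T y := by
  classical
  haveI : Fintype S := Fintype.ofFinite S
  intro hT
  have hne : ∃ i, x i ≠ y i := by
    by_contra h
    push_neg at h
    exact hxy (funext h)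
  set D : Finset ℤ := hfin.toFinset with hDdef
  have hDne : D.Nonempty := by
    obtain ⟨i, hi⟩ := hne
    exact ⟨i, by simp [hDdef, hfin.mem_toFinset]; exact hi⟩
  set a : ℤ := D.min' hDne with ha
  set b : ℤ := D.max' hDne with hb
  have hD : ∀ i, x i ≠ y i → a ≤ i ∧ i ≤ b := by
    intro i hi
    have hmem : i ∈ D := by simp [hDdef, hfin.mem_toFinset]; exact hi
    exact ⟨D.min'_le i hmem, D.le_max' i hmem⟩
  obtain ⟨l₀, hl₀⟩ := hne
  obtain ⟨hl₀a, hl₀b⟩ := hD l₀ hl₀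
  obtain ⟨r, Hloc⟩ := local_rule σ T hσ hTσ hTcont
  set A : ℤ := a - 2*(r:ℤ) with hA
  set B : ℤ := b + 2*(r:ℤ) with hB
  set m : ℤ := B - A + 1 with hm
  have hs : 2 ≤ Fintype.card S := Fintype.one_lt_card_iff.2 ⟨x l₀, y l₀, hl₀⟩
  have hmn : 1 ≤ m.toNat := by omega
  have ht2 : 2 ≤ Fintype.card S ^ m.toNat := by
    calc 2 ≤ Fintype.card S := hs
    _ = Fintype.card S ^ 1 := (pow_one _).symm
    _ ≤ Fintype.card S ^ m.toNat := Nat.pow_le_pow_right (by omega) hmn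
  have hM : 1 ≤ Fintype.card S ^ (2*r+1) := Nat.one_le_pow _ _ (by omega)
  obtain ⟨k, hk⟩ := arith_exists (Fintype.card S ^ (2*r+1)) (Fintype.card S ^ m.toNat) hM ht2
  have hcount := count_le σ T hσ hTσ r Hloc hTsurj x y hT a b A B m hA hB hm hD
    l₀ hl₀a hl₀b hl₀ k
  rw [mul_comm k m.toNat, pow_mul] at hcount
  exact absurd hcount (not_le.2 hk)
end
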